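/- arXiv:1107.1861 — 6 statements merged into one kernel-verified Lean document; each statement's English description precedes it below -/
import Mathlib

section
/- Let Λ be an artin algebra and let P₁ →f→ P₀ →g→ P₋₁ be an exact sequence of finitely generated projective left Λ-modules, and let g = u ∘ e be an epi-mono factorization with e : P₀ → U surjective and u : U → P₋₁ injective. Then the sequence remains exact after applying Hom(−, Λ) if and only if u is a left Λ-approximation of U, i.e., every homomorphism U → Λ factors through u. -/
universe u

/-- Strong exactness of `P₁ → P₀ → P₋₁` (i.e. exactness being preserved by `Hom(-,Λ)`)
is equivalent to the mono part `u` of an epi-mono factorization of `g` being a left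
`Λ`-approximation. -/
theorem stmt0 (k : Type u) [CommRing k] [IsArtinianRing k]
    (Λ : Type u) [Ring Λ] [Algebra k Λ] [Module.Finite k Λ]
    (P1 P0 Pm1 U : Type u)
    [AddCommGroup P1] [Module Λ P1] [AddCommGroup P0] [Module Λ P0]
    [AddCommGroup Pm1] [Module Λ Pm1] [AddCommGroup U] [Module Λ U]
    [Module.Finite Λ P1] [Module.Finite Λ P0] [Module.Finite Λ Pm1]
    [Module.Finite Λ U]
    (hP1 : Module.Projective Λ P1) (hP0 : Module.Projective Λ P0)
    (hPm1 : Module.Projective Λ Pm1)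
    (f : P1 →ₗ[Λ] P0) (g : P0 →ₗ[Λ] Pm1)
    (e : P0 →ₗ[Λ] U) (u : U →ₗ[Λ] Pm1)
    (hexact : Function.Exact f g) (hfac : g = u.comp e)
    (he : Function.Surjective e) (hu : Function.Injective u) :
    Function.Exact (fun α : Pm1 →ₗ[Λ] Λ => α.comp g) (fun α : P0 →ₗ[Λ] Λ => α.comp f)
      ↔ ∀ β : U →ₗ[Λ] Λ, ∃ β' : Pm1 →ₗ[Λ] Λ, β = β'.comp u := by
  have hef : ∀ x : P1, e (f x) = 0 := by
    intro x
    apply hu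
    have : g (f x) = 0 := hexact.apply_apply_eq_zero x
    rw [hfac] at this
    simpa using this
  constructor
  · intro hex β
    -- consider α = β ∘ e
    have hαf : (β.comp e).comp f = 0 := by
      ext x; simp [hef x]
    obtain ⟨γ, hγ⟩ := (hex (β.comp e)).mp hαf
    refine ⟨γ, ?_⟩
    ext y
    obtain ⟨x, rfl⟩ := he y
    have := congrArg (fun φ : P0 →ₗ[Λ] Λ => φ x) hγ
    simp only [LinearMap.comp_apply] at this ⊢
    rw [hfac] at this
    simpa using this.symm
  · intro happ
    intro α
    constructor
    · intro hαf
      -- α vanishes on ker e = range f, so factors through e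
      have hker : LinearMap.ker e ≤ LinearMap.ker α := by
        intro x hx
        have hgx : g x = 0 := by
          rw [hfac]; simp [LinearMap.mem_ker.mp hx]
        obtain ⟨y, rfl⟩ := (hexact x).mp hgx
        have := congrArg (fun φ : P1 →ₗ[Λ] Λ => φ y) hαf
        simpa using this
      set q := LinearMap.quotKerEquivOfSurjective e he with hq
      set β : U →ₗ[Λ] Λ :=
        ((LinearMap.ker e).liftQ α hker).comp (q.symm : U →ₗ[Λ] P0 ⧸ LinearMap.ker e)
      have hβe : β.comp e = α := by
        ext x
        have hx : q.symm (e x) = Submodule.Quotient.mk x := by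
          apply q.injective
          simp [hq, LinearMap.quotKerEquivOfSurjective]
        simp only [β, LinearMap.comp_apply, LinearEquiv.coe_coe, hx]
        simp
      obtain ⟨β', hβ'⟩ := happ β
      refine ⟨β', ?_⟩
      rw [← hβe, hβ', hfac]
      ext x; simp
    · rintro ⟨γ, rfl⟩
      ext x
      simp [hexact.apply_apply_eq_zero x]
end

section
/- Let Λ be a torsionless-finite artin algebra, and let M be a module with add M equal to the additive closure of the class of all torsionless and all divisible Λ-modules. Then for every Λ-module X, there is an exact sequence 0 → W → U ⊕ V → X → 0 where W is torsionless, U is divisible, V is torsionless, and the map U ⊕ V → X is a right add(M)-approximation; consequently Ω_M(X) is torsionless and M-dim X ≤ 1. -/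
open CategoryTheory

universe u

section Defs
variable (Λ : Type u) [Ring Λ]

/-- A module is torsionless if it embeds into a finitely generated free
(equivalently, projective) module. -/
def Torsionless (N : Type u) [AddCommGroup N] [Module Λ N] : Prop :=
  ∃ (n : ℕ) (f : N →ₗ[Λ] (Fin n → Λ)), Function.Injective f

/-- A module is divisible if it is a quotient of a finitely generated injective module. -/
def Divisible (N : Type u) [AddCommGroup N] [Module Λ N] : Prop :=
  ∃ (Q : ModuleCat.{u} Λ), Module.Finite Λ Q ∧ Module.Injective Λ Q ∧
    ∃ f : ↥Q →ₗ[Λ] N, Function.Surjective f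

/-- An indecomposable module: nonzero, and the only idempotent endomorphisms are 0 and 1. -/
def Indec (N : Type u) [AddCommGroup N] [Module Λ N] : Prop :=
  Nontrivial N ∧ ∀ e : Module.End Λ N, e * e = e → e = 0 ∨ e = 1

/-- `N` belongs to `add M`: it is a direct summand of a finite direct sum of copies of `M`. -/
def InAdd (M : Type u) [AddCommGroup M] [Module Λ M]
    (N : Type u) [AddCommGroup N] [Module Λ N] : Prop :=
  ∃ (n : ℕ) (i : N →ₗ[Λ] (Fin n → M)) (p : (Fin n → M) →ₗ[Λ] N),
    p.comp i = LinearMap.id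

/-- `N` is cogenerated by `M`: it embeds into a finite direct sum of copies of `M`. -/
def CogenBy (M : Type u) [AddCommGroup M] [Module Λ M]
    (N : Type u) [AddCommGroup N] [Module Λ N] : Prop :=
  ∃ (n : ℕ) (f : N →ₗ[Λ] (Fin n → M)), Function.Injective f

/-- There are only finitely many isomorphism classes of indecomposable torsionless modules. -/
def TorsionlessFinite : Prop :=
  ∃ (n : ℕ) (L : Fin n → ModuleCat.{u} Λ),
    ∀ N : ModuleCat.{u} Λ, Module.Finite Λ N → Torsionless Λ N → Indec Λ N →
      ∃ i, Nonempty (N ≃ₗ[Λ] L i)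

/-- The algebra is representation-finite. -/
def RepFinite : Prop :=
  ∃ (n : ℕ) (L : Fin n → ModuleCat.{u} Λ),
    ∀ N : ModuleCat.{u} Λ, Module.Finite Λ N → Indec Λ N →
      ∃ i, Nonempty (N ≃ₗ[Λ] L i)

/-- `M` has a projective resolution of length at most `d` by finitely generated projectives. -/
def ProjDimLE : ℕ → ModuleCat.{u} Λ → Prop
  | 0, M => Module.Projective Λ M
  | (d+1), M => ∃ (P : ModuleCat.{u} Λ) (f : ↥P →ₗ[Λ] ↥M),
      Module.Projective Λ P ∧ Module.Finite Λ P ∧ Function.Surjective f ∧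
      ProjDimLE d (ModuleCat.of Λ ↥(LinearMap.ker f))

/-- The global dimension of `Λ` is at most `d`. -/
def GlobalDimLE (d : ℕ) : Prop :=
  ∀ M : ModuleCat.{u} Λ, Module.Finite Λ M → ProjDimLE Λ d M

/-- `M` is a generator-cogenerator: every finitely generated projective and every finitely
generated injective module lies in `add M`. -/
def IsGenCogen (M : Type u) [AddCommGroup M] [Module Λ M] : Prop :=
  Module.Finite Λ M ∧
  (∀ P : ModuleCat.{u} Λ, Module.Finite Λ P → Module.Projective Λ P → InAdd Λ M ↥P) ∧
  (∀ Q : ModuleCat.{u} Λ, Module.Finite Λ Q → Module.Injective Λ Q → InAdd Λ M ↥Q)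

/-- The representation dimension of `Λ` is at most `d`. -/
def RepDimLE (d : ℕ) : Prop :=
  ∃ M : ModuleCat.{u} Λ, IsGenCogen Λ ↥M ∧ GlobalDimLE (Module.End Λ ↥M) d

end Defs

section AuxProofs

theorem aux_quot_noeth {R : Type u} [CommRing R] (J : Ideal R)
    [IsSemisimpleRing (R ⧸ J)] (Q : Type u) [AddCommGroup Q] [Module R Q]
    [IsArtinian R Q] (hQ : Module.IsTorsionBySet R Q J) : IsNoetherian R Q := by
  letI := hQ.module
  haveI : IsScalarTower R (R ⧸ J) Q := hQ.isScalarTower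
  haveI : IsArtinian (R ⧸ J) Q := isArtinian_of_tower R inferInstance
  haveI hN : IsNoetherian (R ⧸ J) Q :=
    ((IsSemisimpleModule.finite_tfae (R := R ⧸ J) (M := Q)).out 2 1).mp ‹IsArtinian (R ⧸ J) Q›
  rw [isNoetherian_def]
  intro S
  let S' : Submodule (R ⧸ J) Q :=
    { carrier := S
      add_mem' := fun ha hb => S.add_mem ha hb
      zero_mem' := S.zero_mem
      smul_mem' := by
        intro c x hx
        obtain ⟨r, rfl⟩ := Ideal.Quotient.mk_surjective c
        rw [hQ.mk_smul]
        exact S.smul_mem r hx }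
  obtain ⟨t, ht⟩ := isNoetherian_def.mp hN S'
  refine ⟨t, le_antisymm ?_ ?_⟩
  · rw [Submodule.span_le]
    intro x hx
    have : x ∈ S' := ht ▸ Submodule.subset_span hx
    exact this
  · intro x hx
    have hx' : x ∈ Submodule.span (R ⧸ J) (t : Set Q) := by rw [ht]; exact hx
    refine Submodule.span_induction (fun y hy => Submodule.subset_span hy)
      (Submodule.zero_mem _) (fun y z _ _ hy hz => Submodule.add_mem _ hy hz) ?_ hx'
    intro c y _ hy
    obtain ⟨r, rfl⟩ := Ideal.Quotient.mk_surjective c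
    rw [hQ.mk_smul]
    exact Submodule.smul_mem _ r hy

theorem aux_artinian_noeth (R : Type u) [CommRing R] [IsArtinianRing R] :
    IsNoetherianRing R := by
  have hJeq : Ideal.jacobson (⊥ : Ideal R) = nilradical R := by
    refine le_antisymm ?_ ?_
    · rw [nilradical_eq_sInf]
      refine le_sInf fun p hp => ?_
      haveI : Ideal.IsPrime p := hp
      exact sInf_le ⟨bot_le, IsArtinianRing.isMaximal_of_isPrime p⟩
    · refine le_sInf fun p hp => ?_
      haveI : Ideal.IsMaximal p := hp.2
      exact nilradical_le_prime p
  set J : Ideal R := Ideal.jacobson ⊥ with hJ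
  obtain ⟨n, hn⟩ := IsArtinianRing.isNilpotent_jacobson_bot (R := R)
  haveI : IsReduced (R ⧸ J) := by
    rw [hJeq]
    exact (Ideal.isRadical_iff_quotient_reduced _).mp (Ideal.radical_isRadical ⊥)
  haveI : IsSemisimpleRing (R ⧸ J) := IsArtinianRing.isSemisimpleRing_of_isReduced (R ⧸ J)
  have key : ∀ i : ℕ, IsNoetherian R ↥(J ^ (n - i) : Ideal R) := by
    intro i
    induction i with
    | zero =>
      have hn' : (J ^ n : Ideal R) = ⊥ := hn
      rw [Nat.sub_zero, hn']
      infer_instance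
    | succ i ih =>
      rcases le_or_gt n i with hni | hni
      · rw [Nat.sub_eq_zero_of_le (le_trans hni (Nat.le_succ i))]
        rw [Nat.sub_eq_zero_of_le hni] at ih
        exact ih
      · have hex : n - i = (n - (i + 1)) + 1 := by omega
        set a := n - (i + 1) with ha
        rw [hex] at ih
        let Mo : Submodule R R := (J ^ a : Ideal R)
        let N' : Submodule R ↥Mo := Submodule.comap Mo.subtype (J ^ (a + 1) : Ideal R)
        have hle : (J ^ (a + 1) : Ideal R) ≤ (J ^ a : Ideal R) :=
          Ideal.pow_le_pow_right (Nat.le_succ a)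
        haveI h1 : IsNoetherian R ↥N' :=
          isNoetherian_of_linearEquiv (Submodule.comapSubtypeEquivOfLe hle).symm
        haveI h2 : IsNoetherian R (↥Mo ⧸ N') := by
          refine aux_quot_noeth J _ ?_
          rintro x ⟨r, hr⟩
          obtain ⟨y, rfl⟩ := Submodule.Quotient.mk_surjective N' x
          rw [← Submodule.Quotient.mk_smul, Submodule.Quotient.mk_eq_zero]
          show (r • (y : R)) ∈ (J ^ (a + 1) : Ideal R)
          rw [smul_eq_mul, mul_comm, pow_succ]
          exact Ideal.mul_mem_mul y.2 hr
        exact isNoetherian_of_range_eq_ker N'.subtype N'.mkQ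
          (by rw [Submodule.range_subtype, Submodule.ker_mkQ])
  have := key n
  rw [Nat.sub_self, pow_zero, Ideal.one_eq_top] at this
  exact (isNoetherian_top_iff).mp this

/-- Multiplication by a central element as a linear map. -/
def centralSMul {Λ : Type u} [Ring Λ] (N : Type u) [AddCommGroup N] [Module Λ N]
    (a : Λ) (h : ∀ b, a * b = b * a) : N →ₗ[Λ] N where
  toFun x := a • x
  map_add' x y := smul_add a x y
  map_smul' b x := by
    simp only [RingHom.id_apply]
    rw [smul_smul, smul_smul, h]

theorem hom_gen (k : Type u) [CommRing k] [IsNoetherianRing k]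
    (Λ : Type u) [Ring Λ] [Algebra k Λ] [Module.Finite k Λ]
    (N X : Type u) [AddCommGroup N] [Module Λ N] [AddCommGroup X] [Module Λ X]
    [Module.Finite Λ N] [Module.Finite Λ X] :
    ∃ (s : ℕ) (f : Fin s → (N →ₗ[Λ] X)), ∀ θ : N →ₗ[Λ] X, ∃ c : Fin s → Λ,
      (∀ j b, c j * b = b * c j) ∧ ∀ x, θ x = ∑ j, c j • f j x := by
  letI mX : Module k X := Module.compHom X (algebraMap k Λ)
  have hsmul : ∀ (a : k) (x : X), a • x = algebraMap k Λ a • x := fun a x => rfl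
  haveI : IsScalarTower k Λ X :=
    ⟨fun a l x => by rw [hsmul, Algebra.smul_def, mul_smul]⟩
  haveI : SMulCommClass Λ k X :=
    ⟨fun l a x => by rw [hsmul, hsmul, smul_smul, smul_smul, Algebra.commutes]⟩
  haveI : Module.Finite k X := Module.Finite.trans Λ X
  haveI : IsNoetherian k X := isNoetherian_of_isNoetherianRing_of_finite k X
  obtain ⟨a, g, hg⟩ := Module.Finite.exists_fin (R := Λ) (M := N)
  let ev : (N →ₗ[Λ] X) →ₗ[k] (Fin a → X) :=
    { toFun := fun θ => fun l => θ (g l)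
      map_add' := fun θ₁ θ₂ => rfl
      map_smul' := fun c θ => rfl }
  have hinj : Function.Injective ev := by
    intro θ₁ θ₂ h
    refine LinearMap.ext_on hg ?_
    rintro x ⟨l, rfl⟩
    exact congrFun h l
  haveI : IsNoetherian k (N →ₗ[Λ] X) := isNoetherian_of_injective ev hinj
  haveI : Module.Finite k (N →ₗ[Λ] X) := ⟨IsNoetherian.noetherian ⊤⟩
  obtain ⟨s, f, hf⟩ := Module.Finite.exists_fin (R := k) (M := (N →ₗ[Λ] X))
  refine ⟨s, f, fun θ => ?_⟩
  have hθ : θ ∈ Submodule.span k (Set.range f) := hf ▸ Submodule.mem_top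
  obtain ⟨c, hc⟩ := (Submodule.mem_span_range_iff_exists_fun k).mp hθ
  refine ⟨fun j => algebraMap k Λ (c j), fun j b => (Algebra.commutes _ _),
    fun x => ?_⟩
  have := congrFun (congrArg (fun (ψ : N →ₗ[Λ] X) => (ψ : N → X)) hc) x
  simp only [LinearMap.coe_sum, Finset.sum_apply, LinearMap.smul_apply] at this
  rw [← this]
  rfl

theorem injective_pi {Λ : Type u} [Ring Λ] (r : ℕ) (Q : Type u) [AddCommGroup Q]
    [Module Λ Q] (hQ : Module.Injective Λ Q) : Module.Injective Λ (Fin r → Q) := by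
  constructor
  intro A B _ _ _ _ f hf g
  have comp : ∀ j : Fin r, ∃ h : B →ₗ[Λ] Q, ∀ x, h (f x) = (LinearMap.proj j).comp g x :=
    fun j => hQ.out f hf ((LinearMap.proj j).comp g)
  choose h hh using comp
  exact ⟨LinearMap.pi h, fun x => funext fun j => hh j x⟩

section TLAux
variable {Λ : Type u} [Ring Λ]

theorem torsionless_of_injective {N N' : Type u} [AddCommGroup N] [Module Λ N]
    [AddCommGroup N'] [Module Λ N'] (f : N →ₗ[Λ] N') (hf : Function.Injective f)
    (h : Torsionless Λ N') : Torsionless Λ N := by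
  obtain ⟨n, g, hg⟩ := h
  exact ⟨n, g.comp f, fun x y hxy => hf (hg hxy)⟩

theorem torsionless_pi {A : Type u} [AddCommGroup A] [Module Λ A] (s : ℕ)
    (h : Torsionless Λ A) : Torsionless Λ (Fin s → A) := by
  obtain ⟨a, ι, hι⟩ := h
  refine ⟨s * a, LinearMap.pi (fun q : Fin (s * a) =>
    (LinearMap.proj (finProdFinEquiv.symm q).2).comp
      (ι.comp (LinearMap.proj (finProdFinEquiv.symm q).1))), ?_⟩
  intro x y hxy
  funext j
  apply hι
  funext b
  have := congrFun hxy (finProdFinEquiv (j, b))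
  simpa only [LinearMap.pi_apply, LinearMap.comp_apply, LinearMap.proj_apply,
    Equiv.symm_apply_apply] using this

theorem torsionless_prod {A B : Type u} [AddCommGroup A] [Module Λ A]
    [AddCommGroup B] [Module Λ B] (hA : Torsionless Λ A) (hB : Torsionless Λ B) :
    Torsionless Λ (A × B) := by
  obtain ⟨a, ιA, hA⟩ := hA
  obtain ⟨b, ιB, hB⟩ := hB
  refine ⟨a + b, LinearMap.pi (fun q : Fin (a + b) =>
    Sum.elim (fun i => (LinearMap.proj i).comp (ιA.comp (LinearMap.fst Λ A B)))
      (fun i => (LinearMap.proj i).comp (ιB.comp (LinearMap.snd Λ A B)))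
      (finSumFinEquiv.symm q)), ?_⟩
  intro x y hxy
  have h1 : ιA x.1 = ιA y.1 := by
    funext i
    have := congrFun hxy (finSumFinEquiv (Sum.inl i))
    simpa only [LinearMap.pi_apply, LinearMap.comp_apply, LinearMap.proj_apply,
      Equiv.symm_apply_apply, Sum.elim_inl, LinearMap.fst_apply] using this
  have h2 : ιB x.2 = ιB y.2 := by
    funext i
    have := congrFun hxy (finSumFinEquiv (Sum.inr i))
    simpa only [LinearMap.pi_apply, LinearMap.comp_apply, LinearMap.proj_apply,
      Equiv.symm_apply_apply, Sum.elim_inr, LinearMap.snd_apply] using this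
  exact Prod.ext (hA h1) (hB h2)

theorem torsionless_lambda (n : ℕ) : Torsionless Λ (Fin n → Λ) :=
  ⟨n, LinearMap.id, fun _ _ h => h⟩

end TLAux

end AuxProofs

set_option maxHeartbeats 1000000 in
/-- For a torsionless-finite artin algebra and `M` with `add M` the additive closure of the
torsionless and divisible modules, every module `X` admits an exact sequence
`0 → W → U ⊕ V → X → 0` with `W`, `V` torsionless and `U` divisible, in which
`U ⊕ V → X` is a right `add M`-approximation; in particular the syzygy `W` is
torsionless and lies in `add M`, so `M`-dim `X ≤ 1`. -/
theorem stmt2 (k : Type u) [CommRing k] [IsArtinianRing k]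
    (Λ : Type u) [Ring Λ] [Algebra k Λ] [Module.Finite k Λ]
    (hTF : TorsionlessFinite Λ)
    (M : ModuleCat.{u} Λ) (hMfin : Module.Finite Λ M)
    -- every torsionless or divisible module lies in add M …
    (hadd₁ : ∀ N : ModuleCat.{u} Λ, Module.Finite Λ N →
      (Torsionless Λ N ∨ Divisible Λ N) → InAdd Λ ↥M ↥N)
    -- … and M lies in the additive closure of the torsionless and divisible modules
    (hadd₂ : ∃ (T D : ModuleCat.{u} Λ), Module.Finite Λ T ∧ Module.Finite Λ D ∧
      Torsionless Λ T ∧ Divisible Λ D ∧ InAdd Λ (↥T × ↥D) ↥M) :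
    ∀ X : ModuleCat.{u} Λ, Module.Finite Λ X →
      ∃ (W U V : ModuleCat.{u} Λ) (i : ↥W →ₗ[Λ] (↥U × ↥V)) (p : (↥U × ↥V) →ₗ[Λ] ↥X),
        Module.Finite Λ W ∧ Module.Finite Λ U ∧ Module.Finite Λ V ∧
        Torsionless Λ W ∧ Divisible Λ U ∧ Torsionless Λ V ∧
        Function.Injective i ∧ Function.Surjective p ∧ Function.Exact i p ∧
        (∀ φ : ↥M →ₗ[Λ] ↥X, ∃ ψ : ↥M →ₗ[Λ] (↥U × ↥V), p.comp ψ = φ) ∧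
        InAdd Λ ↥M ↥W := by
  intro X hX
  haveI := hX
  haveI : IsNoetherianRing k := aux_artinian_noeth k
  haveI : IsNoetherian k Λ := isNoetherian_of_isNoetherianRing_of_finite k Λ
  haveI : IsNoetherianRing Λ := isNoetherian_of_tower k inferInstance
  obtain ⟨T, D, hTfin, hDfin, hT, hD, hMTD⟩ := hadd₂
  haveI := hTfin; haveI := hDfin
  obtain ⟨n₀, π, hπ⟩ := Module.Finite.exists_fin' Λ ↥X
  obtain ⟨r, d, hd⟩ := hom_gen k Λ ↥D ↥X
  obtain ⟨s, f, hf⟩ := hom_gen k Λ ↥T ↥X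
  let u₀ : (Fin r → ↥D) →ₗ[Λ] ↥X := ∑ j, (d j).comp (LinearMap.proj j)
  let v₁ : (Fin s → ↥T) →ₗ[Λ] ↥X := ∑ j, (f j).comp (LinearMap.proj j)
  have hu₀ : ∀ y, u₀ y = ∑ j, d j (y j) := by
    intro y; simp [u₀]
  have hv₁ : ∀ y, v₁ y = ∑ j, f j (y j) := by
    intro y; simp [v₁]
  let Usub := LinearMap.range u₀
  let VT := Fin s → ↥T
  let VP := Fin n₀ → Λ
  let v : (VT × VP) →ₗ[Λ] ↥X := v₁.coprod π
  let p : (↥Usub × (VT × VP)) →ₗ[Λ] ↥X := (Usub.subtype).coprod v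
  let Wsub := LinearMap.ker p
  -- key factorizations
  have keyD : ∀ θ : ↥D →ₗ[Λ] ↥X, ∃ gD : ↥D →ₗ[Λ] ↥Usub,
      Usub.subtype.comp gD = θ := by
    intro θ
    obtain ⟨c, hcc, hc⟩ := hd θ
    let sm : ↥D →ₗ[Λ] (Fin r → ↥D) :=
      LinearMap.pi (fun j => centralSMul ↥D (c j) (hcc j))
    refine ⟨LinearMap.codRestrict Usub (u₀.comp sm) (fun x => ⟨sm x, rfl⟩), ?_⟩
    apply LinearMap.ext
    intro x
    show u₀ (sm x) = θ x
    rw [hu₀, hc x]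
    refine Finset.sum_congr rfl fun j _ => ?_
    exact (d j).map_smul (c j) x
  have keyT : ∀ θ : ↥T →ₗ[Λ] ↥X, ∃ gT : ↥T →ₗ[Λ] VT, v₁.comp gT = θ := by
    intro θ
    obtain ⟨c, hcc, hc⟩ := hf θ
    refine ⟨LinearMap.pi (fun j => centralSMul ↥T (c j) (hcc j)), ?_⟩
    apply LinearMap.ext
    intro x
    show v₁ _ = θ x
    rw [hv₁, hc x]
    refine Finset.sum_congr rfl fun j _ => ?_
    exact (f j).map_smul (c j) x
  -- finiteness
  haveI hUfin : Module.Finite Λ ↥Usub := inferInstance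
  haveI hVfin : Module.Finite Λ (VT × VP) := inferInstance
  haveI : IsNoetherian Λ (↥Usub × (VT × VP)) :=
    isNoetherian_of_isNoetherianRing_of_finite Λ _
  have hWfin : Module.Finite Λ ↥Wsub := Module.Finite.iff_fg.mpr (IsNoetherian.noetherian Wsub)
  -- torsionless V
  have hVtl : Torsionless Λ (VT × VP) :=
    torsionless_prod (torsionless_pi s hT) (torsionless_lambda n₀)
  -- torsionless W
  have hWtl : Torsionless Λ ↥Wsub := by
    refine torsionless_of_injective
      ((LinearMap.snd Λ ↥Usub (VT × VP)).comp Wsub.subtype) ?_ hVtl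
    intro w₁ w₂ h
    have h2 : (w₁ : ↥Usub × (VT × VP)).2 = (w₂ : ↥Usub × (VT × VP)).2 := h
    have e₁ : Usub.subtype (w₁ : ↥Usub × (VT × VP)).1 + v (w₁ : ↥Usub × (VT × VP)).2 = 0 :=
      LinearMap.mem_ker.mp w₁.2
    have e₂ : Usub.subtype (w₂ : ↥Usub × (VT × VP)).1 + v (w₂ : ↥Usub × (VT × VP)).2 = 0 :=
      LinearMap.mem_ker.mp w₂.2
    rw [h2] at e₁
    have h1 : Usub.subtype (w₁ : ↥Usub × (VT × VP)).1 =
        Usub.subtype (w₂ : ↥Usub × (VT × VP)).1 := by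
      have := e₁.trans e₂.symm
      exact add_right_cancel this
    have h1' := Submodule.injective_subtype Usub h1
    exact Subtype.ext (Prod.ext h1' h2)
  -- divisible U
  have hUdiv : Divisible Λ ↥Usub := by
    obtain ⟨Q, hQfin, hQinj, q, hq⟩ := hD
    haveI := hQfin
    refine ⟨ModuleCat.of Λ (Fin r → ↥Q),
      (inferInstance : Module.Finite Λ (Fin r → ↥Q)), injective_pi r ↥Q hQinj, ?_⟩
    refine ⟨LinearMap.codRestrict Usub
      (u₀.comp (LinearMap.pi fun j => q.comp (LinearMap.proj j)))
      (fun x => ⟨_, rfl⟩), ?_⟩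
    rintro ⟨y, hy⟩
    obtain ⟨z, hz⟩ := hy
    have : ∀ j, ∃ w, q w = z j := fun j => hq (z j)
    choose w hw using this
    refine ⟨w, Subtype.ext ?_⟩
    show u₀ (fun j => q (w j)) = y
    rw [show (fun j => q (w j)) = z from funext hw]
    exact hz
  -- surjectivity of p
  have hpsurj : Function.Surjective p := by
    intro x
    obtain ⟨y, hy⟩ := hπ x
    refine ⟨(0, (0, y)), ?_⟩
    show Usub.subtype 0 + (v₁ 0 + π y) = x
    rw [map_zero, map_zero, zero_add, zero_add, hy]
  -- approximation
  have happrox : ∀ φ : ↥M →ₗ[Λ] ↥X, ∃ ψ : ↥M →ₗ[Λ] (↥Usub × (VT × VP)),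
      p.comp ψ = φ := by
    intro φ
    obtain ⟨m, iM, prM, hsplit⟩ := hMTD
    have liftTD : ∀ χ : (↥T × ↥D) →ₗ[Λ] ↥X,
        ∃ g : (↥T × ↥D) →ₗ[Λ] (↥Usub × (VT × VP)), p.comp g = χ := by
      intro χ
      obtain ⟨gT, hgT⟩ := keyT (χ.comp (LinearMap.inl Λ ↥T ↥D))
      obtain ⟨gD, hgD⟩ := keyD (χ.comp (LinearMap.inr Λ ↥T ↥D))
      refine ⟨((LinearMap.inr Λ ↥Usub (VT × VP)).comp
          ((LinearMap.inl Λ VT VP).comp gT)).coprod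
        ((LinearMap.inl Λ ↥Usub (VT × VP)).comp gD), ?_⟩
      apply LinearMap.ext
      rintro ⟨t, dd⟩
      have e1 : v₁ (gT t) = χ (t, 0) := LinearMap.congr_fun hgT t
      have e2 : Usub.subtype (gD dd) = χ (0, dd) := LinearMap.congr_fun hgD dd
      show p ((0, (gT t, 0)) + (gD dd, 0)) = χ (t, dd)
      rw [map_add]
      show (Usub.subtype 0 + (v₁ (gT t) + π 0)) + (Usub.subtype (gD dd) + v 0) = χ (t, dd)
      simp only [map_zero]
      rw [zero_add, add_zero, add_zero, e1, e2, ← map_add]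
      congr 1
      exact Prod.ext (add_zero t) (zero_add dd)
    let φ' := φ.comp prM
    have hG : ∀ j : Fin m, ∃ gj : (↥T × ↥D) →ₗ[Λ] (↥Usub × (VT × VP)),
        p.comp gj = φ'.comp (LinearMap.single Λ (fun _ : Fin m => ↥T × ↥D) j) :=
      fun j => liftTD _
    choose gj hgj using hG
    let G : (Fin m → ↥T × ↥D) →ₗ[Λ] (↥Usub × (VT × VP)) :=
      ∑ j, (gj j).comp (LinearMap.proj j)
    have hpG : p.comp G = φ' := by
      apply LinearMap.ext
      intro y
      have h1 : G y = ∑ j, gj j (y j) := by simp [G]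
      rw [LinearMap.comp_apply, h1, map_sum]
      have h2 : ∀ j : Fin m, p (gj j (y j)) = φ' (Pi.single j (y j)) := by
        intro j
        have := LinearMap.congr_fun (hgj j) (y j)
        simpa using this
      rw [Finset.sum_congr rfl (fun j _ => h2 j), ← map_sum]
      congr 1
      exact Finset.univ_sum_single y
    refine ⟨G.comp iM, ?_⟩
    rw [← LinearMap.comp_assoc, hpG]
    show (φ.comp prM).comp iM = φ
    rw [LinearMap.comp_assoc, hsplit, LinearMap.comp_id]
  refine ⟨ModuleCat.of Λ ↥Wsub, ModuleCat.of Λ ↥Usub, ModuleCat.of Λ (VT × VP),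
    Wsub.subtype, p, ?_, ?_, ?_, ?_, ?_, ?_, ?_, ?_, ?_, ?_, ?_⟩
  · exact hWfin
  · exact hUfin
  · exact hVfin
  · exact hWtl
  · exact hUdiv
  · exact hVtl
  · exact Submodule.injective_subtype Wsub
  · exact hpsurj
  · exact LinearMap.exact_iff.mpr (Submodule.range_subtype Wsub).symm
  · exact happrox
  · exact hadd₁ (ModuleCat.of Λ ↥Wsub) hWfin (Or.inl hWtl)
end

section
/- An artin algebra Λ is torsionless-finite if and only if there exists a faithful Λ-module M such that the subcategory of modules cogenerated by M is finite (contains only finitely many isomorphism classes of indecomposables). -/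
open CategoryTheory

universe u

lemma faithful_embeds (Λ : Type u) [Ring Λ] [IsArtinian Λ Λ]
    (M : Type u) [AddCommGroup M] [Module Λ M]
    (hf : ∀ a : Λ, (∀ x : M, a • x = 0) → a = 0) :
    ∃ (t : ℕ) (h : Λ →ₗ[Λ] (Fin t → M)), Function.Injective h := by
  classical
  set K : M → Submodule Λ Λ := fun x => LinearMap.ker (LinearMap.toSpanSingleton Λ M x) with hK
  set S : Set (Submodule Λ Λ) := {p | ∃ s : Finset M, p = ⨅ x ∈ s, K x} with hS
  have hne : S.Nonempty := ⟨⊤, ∅, by simp⟩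
  obtain ⟨p, ⟨s, rfl⟩, hmin⟩ := IsArtinian.set_has_minimal S hne
  have hbot : (⨅ x ∈ s, K x) = ⊥ := by
    rw [eq_bot_iff]
    intro a ha
    have key : ∀ x : M, a • x = 0 := by
      intro x
      have h1 : (⨅ y ∈ insert x s, K y) ∈ S := ⟨insert x s, rfl⟩
      have h2 : (⨅ y ∈ insert x s, K y) ≤ ⨅ y ∈ s, K y := by
        apply le_iInf₂; intro y hy
        exact iInf₂_le y (Finset.mem_insert_of_mem hy)
      have h3 : ¬ (⨅ y ∈ insert x s, K y) < ⨅ y ∈ s, K y := hmin _ h1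
      have heq : (⨅ y ∈ insert x s, K y) = ⨅ y ∈ s, K y := le_antisymm h2 (by
        by_contra hc
        exact h3 (lt_of_le_of_ne h2 (fun h => hc (h ▸ le_refl _))))
      have : a ∈ ⨅ y ∈ insert x s, K y := heq ▸ ha
      have := (Submodule.mem_iInf _).mp this x
      have := (Submodule.mem_iInf _).mp this (Finset.mem_insert_self x s)
      simpa [hK, LinearMap.mem_ker] using this
    simpa using hf a key
  refine ⟨s.card, LinearMap.pi (fun i => LinearMap.toSpanSingleton Λ M (s.equivFin.symm i : M)), ?_⟩
  rw [← LinearMap.ker_eq_bot, eq_bot_iff]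
  intro a ha
  simp only [LinearMap.mem_ker, LinearMap.pi_apply] at ha
  have ha' : ∀ x ∈ s, a • x = 0 := by
    intro x hx
    have := congrFun ha (s.equivFin ⟨x, hx⟩)
    simpa [LinearMap.toSpanSingleton_apply] using this
  rw [← hbot]
  simp only [Submodule.mem_iInf]
  intro x hx
  simpa [hK, LinearMap.mem_ker] using ha' x hx

/-- An artin algebra is torsionless-finite iff there is a faithful module `M` such that the
subcategory of modules cogenerated by `M` is finite. -/
theorem stmt4 (k : Type u) [CommRing k] [IsArtinianRing k]
    (Λ : Type u) [Ring Λ] [Algebra k Λ] [Module.Finite k Λ] :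
    TorsionlessFinite Λ ↔
      ∃ M : ModuleCat.{u} Λ, Module.Finite Λ M ∧
        (∀ a : Λ, (∀ x : ↥M, a • x = 0) → a = 0) ∧
        ∃ (n : ℕ) (L : Fin n → ModuleCat.{u} Λ),
          ∀ N : ModuleCat.{u} Λ, Module.Finite Λ N → Indec Λ N → CogenBy Λ ↥M ↥N →
            ∃ i, Nonempty (N ≃ₗ[Λ] L i) := by
  constructor
  · rintro ⟨n, L, hL⟩
    refine ⟨ModuleCat.of Λ Λ, inferInstanceAs (Module.Finite Λ Λ), ?_, n, L, ?_⟩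
    · intro a ha
      simpa using ha (1 : Λ)
    · intro N hN hI hC
      exact hL N hN hC hI
  · rintro ⟨M, hMfin, hfaith, n, L, hL⟩
    haveI : IsArtinian k Λ := inferInstance
    haveI : IsArtinian Λ Λ := isArtinian_of_tower k ‹IsArtinian k Λ›
    obtain ⟨t, h, hinj⟩ := faithful_embeds Λ (↥M) hfaith
    refine ⟨n, L, fun N hN hT hI => ?_⟩
    apply hL N hN hI
    obtain ⟨m, e, he⟩ := hT
    set G : (Fin m → Λ) →ₗ[Λ] (Fin (m * t) → ↥M) := LinearMap.pi (fun j =>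
      (LinearMap.proj (finProdFinEquiv.symm j).2).comp
        (h.comp (LinearMap.proj (finProdFinEquiv.symm j).1))) with hGdef
    have hG : Function.Injective G := by
      intro v w hvw
      funext i
      apply hinj
      funext j'
      have := congrFun hvw (finProdFinEquiv (i, j'))
      simpa only [hGdef, LinearMap.pi_apply, LinearMap.coe_comp, Function.comp_apply,
        LinearMap.proj_apply, Equiv.symm_apply_apply] using this
    exact ⟨m * t, G.comp e, by rw [LinearMap.coe_comp]; exact hG.comp he⟩
end

section
/- Let Λ be an artin algebra with radical J. Every indecomposable torsionless Λ-module is either projective or cogenerated by J (i.e., embeds in a finite direct sum of copies of J). -/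
open CategoryTheory

universe u

section Aux

open Polynomial

variable {R : Type u} [Ring R]

/-- A finite product of semisimple modules is semisimple. -/
lemma auxPiSemisimple {ι : Type u} [Finite ι] (φ : ι → Type u) [∀ i, AddCommGroup (φ i)]
    [∀ i, Module R (φ i)] (h : ∀ i, IsSemisimpleModule R (φ i)) :
    IsSemisimpleModule R (∀ i, φ i) := by
  classical
  refine isSemisimpleModule_of_isSemisimpleModule_submodule'
    (p := fun i => LinearMap.range (LinearMap.single R φ i)) (fun i => ?_)
    (LinearMap.iSup_range_single R φ)
  letI := h i
  exact IsSemisimpleModule.congr (LinearEquiv.ofInjective _ (Pi.single_injective i)).symm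

/-- The quotient by a finite infimum of submodules with semisimple quotients is semisimple. -/
lemma auxQuotSInfSemisimple {M : Type u} [AddCommGroup M] [Module R M]
    (s : Set (Submodule R M)) (hfin : s.Finite)
    (hs : ∀ p ∈ s, IsSemisimpleModule R (M ⧸ p)) :
    IsSemisimpleModule R (M ⧸ sInf s) := by
  haveI : Finite ↥s := hfin.to_subtype
  let F : M →ₗ[R] ∀ p : s, M ⧸ (p : Submodule R M) :=
    LinearMap.pi fun p => (p : Submodule R M).mkQ
  have hker : LinearMap.ker F = sInf s := by
    rw [LinearMap.ker_pi, sInf_eq_iInf']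
    simp [Submodule.ker_mkQ]
  haveI hpi : IsSemisimpleModule R (∀ p : s, M ⧸ (p : Submodule R M)) :=
    auxPiSemisimple _ fun p => hs p p.2
  exact IsSemisimpleModule.congr
    ((Submodule.quotEquivOfEq _ _ hker.symm).trans F.quotKerEquivRange)

/-- Over a left artinian ring, the quotient by the Jacobson radical is a semisimple module. -/
lemma auxJacobsonSemisimple [IsArtinianRing R] :
    IsSemisimpleModule R (R ⧸ (Ideal.jacobson (⊥ : Ideal R) : Submodule R R)) := by
  obtain ⟨K, ⟨s, hsfin, hcoatom, rfl⟩, hmin⟩ :=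
    IsArtinian.set_has_minimal (R := R) (M := R)
      {K : Ideal R | ∃ s : Set (Ideal R), s.Finite ∧ (∀ m ∈ s, IsCoatom m) ∧ K = sInf s}
      ⟨⊤, ∅, Set.finite_empty, by simp, by simp⟩
  have hle : sInf s ≤ Ideal.jacobson (⊥ : Ideal R) := by
    rw [Ideal.jacobson]
    refine le_sInf ?_
    rintro m ⟨-, hm⟩
    by_contra hnot
    have hlt : m ⊓ sInf s < sInf s :=
      lt_of_le_of_ne inf_le_right (fun h => hnot (by rw [← h]; exact inf_le_left))
    exact hmin (m ⊓ sInf s)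
      ⟨insert m s, hsfin.insert m,
        fun p hp => by
          rcases Set.mem_insert_iff.mp hp with rfl | hp
          · exact Ideal.isMaximal_def.mp hm
          · exact hcoatom p hp,
        by rw [sInf_insert]⟩ hlt
  have hge : Ideal.jacobson (⊥ : Ideal R) ≤ sInf s := by
    refine le_sInf fun m hm => ?_
    rw [Ideal.jacobson]
    exact sInf_le ⟨bot_le, Ideal.isMaximal_def.mpr (hcoatom m hm)⟩
  have heq : Ideal.jacobson (⊥ : Ideal R) = sInf s := le_antisymm hge hle
  have hsemi := auxQuotSInfSemisimple (R := R) (M := R) s hsfin (fun p hp => by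
    haveI : IsSimpleModule R (R ⧸ p) := (isSimpleModule_iff_isCoatom).mpr (hcoatom p hp)
    infer_instance)
  rw [show (Ideal.jacobson (⊥ : Ideal R) : Submodule R R) = sInf s from heq]
  exact hsemi

/-- Every element of the Jacobson radical of a left artinian ring is nilpotent. -/
lemma auxNilpotent [IsArtinianRing R] {x : R} (hx : x ∈ Ideal.jacobson (⊥ : Ideal R)) :
    ∃ n, x ^ n = 0 := by
  have hmono : ∀ a b : ℕ, a ≤ b →
      (Submodule.span R {x ^ b} : Submodule R R) ≤ Submodule.span R {x ^ a} := by
    intro a b hab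
    rw [Submodule.span_le, Set.singleton_subset_iff]
    exact Submodule.mem_span_singleton.mpr
      ⟨x ^ (b - a), by rw [smul_eq_mul, ← pow_add, Nat.sub_add_cancel hab]⟩
  obtain ⟨n, hn⟩ := IsArtinian.monotone_stabilizes (R := R) (M := R)
    ⟨fun n => OrderDual.toDual (Submodule.span R {x ^ n}),
      fun a b hab => hmono a b hab⟩
  have hspan : (Submodule.span R {x ^ n} : Submodule R R) = Submodule.span R {x ^ (n + 1)} := by
    have := hn (n + 1) (Nat.le_succ n)
    exact OrderDual.toDual.injective this
  have hxmem : x ^ n ∈ Submodule.span R {x ^ (n + 1)} := by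
    rw [← hspan]; exact Submodule.mem_span_singleton_self _
  obtain ⟨c, hc⟩ := Submodule.mem_span_singleton.mp hxmem
  rw [smul_eq_mul] at hc
  obtain ⟨z, hz⟩ := Ideal.mem_jacobson_iff.mp hx (-c)
  rw [Ideal.mem_bot] at hz
  have hzz : z * (1 - c * x) = 1 := by
    rw [mul_sub, mul_one, ← mul_assoc]
    have h1 : z * -c * x = -(z * c * x) := by rw [mul_neg, neg_mul]
    rw [h1] at hz
    have h3 : z - z * c * x - 1 = 0 := by rw [← hz]; abel
    exact sub_eq_zero.mp h3
  have h0 : (1 - c * x) * x ^ n = 0 := by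
    rw [sub_mul, one_mul]
    have : c * x * x ^ n = x ^ n := by
      rw [mul_assoc, ← pow_succ']
      exact hc
    rw [this, sub_self]
  refine ⟨n, ?_⟩
  calc x ^ n = 1 * x ^ n := (one_mul _).symm
    _ = z * (1 - c * x) * x ^ n := by rw [hzz]
    _ = z * ((1 - c * x) * x ^ n) := by rw [mul_assoc]
    _ = 0 := by rw [h0, mul_zero]

/-- Lifting idempotents along a nilpotent defect, staying in the left ideal generated by `a`. -/
lemma auxLift (n : ℕ) (a : R) (ha : (a * a - a) ^ n = 0) :
    ∃ e : R, e * e = e ∧ e ∈ Submodule.span R {a} ∧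
      e - a ∈ Submodule.span R {a * a - a} := by
  induction n using Nat.strong_induction_on generalizing a with
  | _ n ih =>
  rcases n with _ | n
  · rw [pow_zero] at ha
    haveI : Subsingleton R := subsingleton_of_zero_eq_one ha.symm
    exact ⟨a, Subsingleton.elim _ _, Submodule.mem_span_singleton_self a, by
      rw [sub_self]; exact Submodule.zero_mem _⟩
  rcases n with _ | m
  · rw [pow_one, sub_eq_zero] at ha
    exact ⟨a, ha, Submodule.mem_span_singleton_self a, by
      rw [sub_self]; exact Submodule.zero_mem _⟩
  · -- inductive step : `n = m + 2`
    let A : Polynomial ℤ →ₐ[ℤ] R := Polynomial.aeval a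
    have hAX : A X = a := Polynomial.aeval_X a
    have hAq : A (X ^ 2 - X) = a * a - a := by
      rw [map_sub, map_pow, hAX, pow_two]
    set a1 : R := A (3 * X ^ 2 - 2 * X ^ 3) with ha1
    have key1 : a1 * a1 - a1 = A ((4 * X ^ 2 - 4 * X - 3) * (X ^ 2 - X) ^ 2) := by
      rw [ha1, ← map_mul, ← map_sub]
      congr 1
      ring
    have hpow : (a1 * a1 - a1) ^ (m + 1) = 0 := by
      rw [key1, ← map_pow]
      have hexp : (((4 * X ^ 2 - 4 * X - 3 : Polynomial ℤ)) * (X ^ 2 - X) ^ 2) ^ (m + 1) =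
          ((4 * X ^ 2 - 4 * X - 3) ^ (m + 1) * (X ^ 2 - X) ^ m) * (X ^ 2 - X) ^ (m + 2) := by
        rw [mul_pow, ← pow_mul]
        rw [show 2 * (m + 1) = m + (m + 2) by omega, pow_add]
        ring
      rw [hexp, map_mul, map_pow, hAq, ha, mul_zero]
    obtain ⟨e, he, hea1, het1⟩ := ih (m + 1) (by omega) a1 hpow
    have hsub1 : Submodule.span R {a1} ≤ Submodule.span R {a} := by
      rw [Submodule.span_le, Set.singleton_subset_iff]
      refine Submodule.mem_span_singleton.mpr ⟨A (3 * X - 2 * X ^ 2), ?_⟩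
      rw [smul_eq_mul, ← hAX, ← map_mul, ha1]
      congr 1
      ring
    have hsub2 : Submodule.span R {a1 * a1 - a1} ≤ Submodule.span R {a * a - a} := by
      rw [Submodule.span_le, Set.singleton_subset_iff]
      refine Submodule.mem_span_singleton.mpr ⟨A ((4 * X ^ 2 - 4 * X - 3) * (X ^ 2 - X)), ?_⟩
      rw [smul_eq_mul, ← hAq, ← map_mul, key1]
      congr 1
      ring
    have h2 : a1 - a ∈ Submodule.span R {a * a - a} := by
      refine Submodule.mem_span_singleton.mpr ⟨A (1 - 2 * X), ?_⟩
      rw [smul_eq_mul, ← hAq, ← map_mul, ha1, ← hAX, ← map_sub]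
      congr 1
      ring
    refine ⟨e, he, hsub1 hea1, ?_⟩
    have heq : e - a = (e - a1) + (a1 - a) := by abel
    rw [heq]
    exact Submodule.add_mem _ (hsub2 het1) h2

/-- A left ideal of a left artinian ring that is not contained in the Jacobson radical
contains a nonzero idempotent. -/
lemma auxIdemInIdeal [IsArtinianRing R] (I : Ideal R)
    (hI : ¬ I ≤ Ideal.jacobson (⊥ : Ideal R)) :
    ∃ e : R, e * e = e ∧ e ≠ 0 ∧ e ∈ I := by
  set J : Submodule R R := (Ideal.jacobson (⊥ : Ideal R) : Submodule R R) with hJ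
  haveI hss : IsSemisimpleModule R (R ⧸ J) := auxJacobsonSemisimple
  set Ibar : Submodule R (R ⧸ J) := Submodule.map J.mkQ I with hIbar
  obtain ⟨c, hc⟩ := exists_isCompl Ibar
  set π : R →ₗ[R] (R ⧸ J) :=
    Ibar.subtype.comp ((Ibar.linearProjOfIsCompl c hc).comp J.mkQ) with hπ
  have hπmem : ∀ r : R, π r ∈ Ibar := fun r => ((Ibar.linearProjOfIsCompl c hc) (J.mkQ r)).2
  have key1 : ∀ x ∈ I, π x = J.mkQ x := by
    intro x hx
    have hmem : J.mkQ x ∈ Ibar := Submodule.mem_map_of_mem hx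
    have hproj : (Ibar.linearProjOfIsCompl c hc) (J.mkQ x) = ⟨J.mkQ x, hmem⟩ := by
      conv_lhs => rw [show J.mkQ x = ((⟨J.mkQ x, hmem⟩ : Ibar) : R ⧸ J) from rfl]
      exact Submodule.linearProjOfIsCompl_apply_left hc _
    have hπx : π x = ((Ibar.linearProjOfIsCompl c hc) (J.mkQ x) : R ⧸ J) := rfl
    rw [hπx, hproj]
  have key2 : ∀ r : R, π r = r • π 1 := by
    intro r
    conv_lhs => rw [show r = r • (1 : R) by rw [smul_eq_mul, mul_one]]
    rw [map_smul]
  obtain ⟨a, haI, ha⟩ := Submodule.mem_map.mp (hπmem 1)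
  have hmkq : ∀ r : R, r • J.mkQ a = J.mkQ (r * a) := fun r => by
    rw [← map_smul, smul_eq_mul]
  have hat : a * a - a ∈ J := by
    have h1 : J.mkQ a = J.mkQ (a * a) :=
      calc J.mkQ a = π a := (key1 a haI).symm
        _ = a • π 1 := key2 a
        _ = a • J.mkQ a := by rw [← ha]
        _ = J.mkQ (a * a) := hmkq a
    have h2 : J.mkQ (a * a - a) = 0 := by rw [map_sub, ← h1, sub_self]
    rwa [Submodule.mkQ_apply, Submodule.Quotient.mk_eq_zero] at h2
  have haJ : a ∉ J := by
    obtain ⟨x0, hx0I, hx0J⟩ := SetLike.not_le_iff_exists.mp hI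
    intro haJ
    apply hx0J
    have hmk0 : J.mkQ a = 0 := by
      rw [Submodule.mkQ_apply, Submodule.Quotient.mk_eq_zero]; exact haJ
    have h2 : J.mkQ x0 = 0 :=
      calc J.mkQ x0 = π x0 := (key1 x0 hx0I).symm
        _ = x0 • π 1 := key2 x0
        _ = x0 • J.mkQ a := by rw [← ha]
        _ = 0 := by rw [hmk0, smul_zero]
    rwa [Submodule.mkQ_apply, Submodule.Quotient.mk_eq_zero] at h2
  obtain ⟨n, hn⟩ := auxNilpotent (x := a * a - a) hat
  obtain ⟨e, he, hea, het⟩ := auxLift n a hn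
  have hJt : Submodule.span R {a * a - a} ≤ J := by
    rw [Submodule.span_le, Set.singleton_subset_iff]; exact hat
  refine ⟨e, he, ?_, ?_⟩
  · intro h0
    apply haJ
    have hmemJ : e - a ∈ J := hJt het
    rw [h0, zero_sub] at hmemJ
    simpa using J.neg_mem hmemJ
  · have hspanI : Submodule.span R {a} ≤ I := by
      rw [Submodule.span_le, Set.singleton_subset_iff]; exact haI
    exact hspanI hea

end Aux

/-- Every indecomposable torsionless module over an artin algebra is projective or
cogenerated by the radical `J = rad Λ`. -/
theorem stmt5 (k : Type u) [CommRing k] [IsArtinianRing k]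
    (Λ : Type u) [Ring Λ] [Algebra k Λ] [Module.Finite k Λ]
    (N : ModuleCat.{u} Λ) (hfin : Module.Finite Λ N) (hind : Indec Λ N)
    (htl : Torsionless Λ N) :
    Module.Projective Λ N ∨ CogenBy Λ ↥((⊥ : Ideal Λ).jacobson) ↥N := by
  classical
  obtain ⟨hNT, hIdem⟩ := hind
  obtain ⟨n, f, hf⟩ := htl
  haveI hart : IsArtinianRing Λ := isArtinian_of_tower k (inferInstance : IsArtinian k Λ)
  by_cases hall : ∀ (v : ↥N) (i : Fin n), f v i ∈ (⊥ : Ideal Λ).jacobson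
  · right
    refine ⟨n, LinearMap.pi fun i : Fin n =>
      LinearMap.codRestrict _ ((LinearMap.proj i).comp f) (fun v => hall v i), ?_⟩
    intro v w hvw
    apply hf
    funext i
    have h1 := congrFun hvw i
    exact congrArg Subtype.val h1
  · left
    push_neg at hall
    obtain ⟨v, i, hvi⟩ := hall
    set g : ↥N →ₗ[Λ] Λ := (LinearMap.proj i).comp f with hg
    have hInle : ¬ (LinearMap.range g : Ideal Λ) ≤ (⊥ : Ideal Λ).jacobson := by
      intro hle
      exact hvi (hle ⟨v, rfl⟩)
    obtain ⟨e, he, hne, heI⟩ := auxIdemInIdeal (LinearMap.range g) hInle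
    obtain ⟨x0, hx0⟩ := heI
    set σ : ↥N →ₗ[Λ] ↥N := (LinearMap.toSpanSingleton Λ ↥N (e • x0)).comp g with hσ
    have happ : ∀ y, σ y = g y • (e • x0) := fun y => rfl
    have hgs : ∀ w, g (σ w) = g w * e := by
      intro w
      rw [happ, map_smul, map_smul, hx0, smul_eq_mul, smul_eq_mul, he]
    have hσσ : σ * σ = σ := by
      ext w
      show σ (σ w) = σ w
      rw [happ (σ w), hgs w, happ w, smul_smul, smul_smul, mul_assoc, he]
    rcases hIdem σ hσσ with h0 | h1
    · exfalso
      have hx : σ x0 = e • x0 := by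
        rw [happ, hx0, smul_smul, he]
      have hz : e • x0 = 0 := by
        rw [← hx, h0]; rfl
      have hez : e = 0 := by
        have h2 := congrArg g hz
        rw [map_smul, smul_eq_mul, hx0, he, map_zero] at h2
        exact h2
      exact hne hez
    · refine Module.Projective.of_split (R := Λ) (M := Λ) g
        (LinearMap.toSpanSingleton Λ ↥N (e • x0)) ?_
      ext w
      have h2 : (LinearMap.toSpanSingleton Λ ↥N (e • x0)) (g w) = σ w := (happ w).symm
      show (LinearMap.toSpanSingleton Λ ↥N (e • x0)) (g w) = w
      rw [h2, h1]
      rfl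
end

section
/- Let Λ be an artin algebra with radical J satisfying J² = 0. Then every indecomposable torsionless Λ-module is either projective or simple, and every indecomposable divisible Λ-module is either injective or simple. -/
open CategoryTheory

universe u

section Aux

variable {Λ : Type u} [Ring Λ]

local notation "𝕁" => Ideal.jacobson (⊥ : Ideal Λ)

/-- A finite product of semisimple modules is semisimple. -/
lemma aux_pi_isSemisimple {ι : Type u} [Finite ι] (M : ι → Type u)
    [∀ i, AddCommGroup (M i)] [∀ i, Module Λ (M i)] [∀ i, IsSemisimpleModule Λ (M i)] :
    IsSemisimpleModule Λ (∀ i, M i) := by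
  classical
  exact isSemisimpleModule_of_isSemisimpleModule_submodule'
    (p := fun i => LinearMap.range (LinearMap.single Λ M i))
    (fun i => IsSemisimpleModule.range _) (LinearMap.iSup_range_single Λ M)

/-- Over a left artinian ring, the quotient by the Jacobson radical is a semisimple module. -/
lemma aux_jacobson_semisimple [IsArtinian Λ Λ] :
    IsSemisimpleModule Λ (Λ ⧸ 𝕁) := by
  classical
  obtain ⟨I₀, ⟨s, hs, rfl⟩, hmin⟩ := IsArtinian.set_has_minimal
    {I : Ideal Λ | ∃ t : Finset (Ideal Λ), (∀ m ∈ t, m.IsMaximal) ∧ I = t.inf id}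
    ⟨⊤, ∅, by simp, by simp⟩
  have hJs : 𝕁 = s.inf id := by
    apply le_antisymm
    · exact Finset.le_inf fun m hm => sInf_le ⟨bot_le, hs m hm⟩
    · refine le_sInf fun m hm => ?_
      by_contra hle
      have hmem : (insert m s).inf id ∈
          {I : Ideal Λ | ∃ t : Finset (Ideal Λ), (∀ m ∈ t, m.IsMaximal) ∧ I = t.inf id} := by
        refine ⟨insert m s, fun x hx => ?_, rfl⟩
        rcases Finset.mem_insert.mp hx with h | h
        · exact h ▸ hm.2
        · exact hs x h
      refine hmin _ hmem (lt_of_le_of_ne ?_ fun he => hle ?_)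
      · rw [Finset.inf_insert]; exact inf_le_right
      · rw [← he, Finset.inf_insert]; exact inf_le_left
  haveI : ∀ m : s, IsSimpleModule Λ (Λ ⧸ (m : Ideal Λ)) := fun m =>
    isSimpleModule_iff_isCoatom.mpr (Ideal.isMaximal_def.mp (hs m m.2))
  haveI : IsSemisimpleModule Λ (∀ m : s, Λ ⧸ (m : Ideal Λ)) := aux_pi_isSemisimple _
  set Φ : Λ →ₗ[Λ] ∀ m : s, Λ ⧸ (m : Ideal Λ) := LinearMap.pi fun m => (m : Ideal Λ).mkQ with hΦ
  have hker : LinearMap.ker Φ = 𝕁 := by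
    rw [hΦ, LinearMap.ker_pi, hJs]
    simp only [Submodule.ker_mkQ]
    rw [Finset.inf_id_eq_sInf, sInf_eq_iInf']
    rfl
  have := IsSemisimpleModule.congr (R := Λ) (N := Λ ⧸ LinearMap.ker Φ)
    (M := ↥(LinearMap.range Φ)) Φ.quotKerEquivRange
  rwa [hker] at this

/-- A module annihilated by the Jacobson radical (over an artinian ring) is semisimple. -/
lemma aux_semisimple_of_jacobson_ann [IsArtinian Λ Λ] {N : Type u} [AddCommGroup N] [Module Λ N]
    (h : ∀ a ∈ 𝕁, ∀ v : N, a • v = 0) : IsSemisimpleModule Λ N := by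
  haveI := aux_jacobson_semisimple (Λ := Λ)
  refine isSemisimpleModule_of_isSemisimpleModule_submodule'
    (p := fun v : N => Submodule.span Λ {v}) (fun v => ?_) ?_
  · have hle : 𝕁 ≤ LinearMap.ker (LinearMap.toSpanSingleton Λ N v) :=
      fun a ha => LinearMap.mem_ker.mpr (h a ha v)
    have hr : LinearMap.range (Submodule.liftQ 𝕁 (LinearMap.toSpanSingleton Λ N v) hle)
        = Submodule.span Λ {v} := by
      rw [Submodule.range_liftQ]
      exact (LinearMap.span_singleton_eq_range Λ N v).symm
    show IsSemisimpleModule Λ ↥(Submodule.span Λ {v})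
    rw [← hr]
    exact IsSemisimpleModule.range _
  · rw [eq_top_iff]
    intro x _
    exact le_iSup (fun v : N => Submodule.span Λ {v}) x (Submodule.mem_span_singleton_self x)

/-- An indecomposable semisimple module is simple. -/
lemma aux_simple_of_indec {N : Type u} [AddCommGroup N] [Module Λ N]
    [IsSemisimpleModule Λ N] (hN : Indec Λ N) : IsSimpleModule Λ N := by
  obtain ⟨hnt, hidem⟩ := hN
  haveI : Nontrivial (Submodule Λ N) := by
    obtain ⟨x, hx⟩ := exists_ne (0 : N)
    refine ⟨⊥, ⊤, fun h => hx ?_⟩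
    have : x ∈ (⊥ : Submodule Λ N) := h.symm ▸ Submodule.mem_top
    simpa using this
  refine { toIsSimpleOrder := ⟨fun S => ?_⟩ }
  obtain ⟨C, hC⟩ := exists_isCompl S
  set e : Module.End Λ N := S.subtype ∘ₗ Submodule.linearProjOfIsCompl S C hC with he_def
  have heS : ∀ x : N, e x ∈ S := fun x => (Submodule.linearProjOfIsCompl S C hC x).2
  have heid : ∀ x ∈ S, e x = x := by
    intro x hx
    show (Submodule.projectionOnto S C hC x : N) = x
    rw [Submodule.projectionOnto_apply_left hC ⟨x, hx⟩]
  have he : e * e = e := by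
    apply LinearMap.ext
    intro x
    exact heid _ (heS x)
  rcases hidem e he with h0 | h1
  · left
    rw [eq_bot_iff]
    intro x hx
    have : e x = x := heid x hx
    rw [h0] at this
    simpa using this.symm
  · right
    have hCbot : C = ⊥ := by
      rw [eq_bot_iff]
      intro x hx
      have h1x : e x = x := by rw [h1]; rfl
      have h0x : e x = 0 := by
        show (Submodule.projectionOnto S C hC x : N) = 0
        rw [Submodule.projectionOnto_apply_of_mem_right hC hx]
        rfl
      rw [Submodule.mem_bot, ← h1x, h0x]
    have := hC.codisjoint
    rw [codisjoint_iff, hCbot, sup_bot_eq] at this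
    exact this

/-- Key case of part 1: a torsionless indecomposable module not annihilated by the radical
(witnessed by a coordinate avoiding the radical) is projective. -/
lemma aux_projective_of_torsionless [IsArtinian Λ Λ]
    (hJ2 : ∀ a b : Λ, a ∈ 𝕁 → b ∈ 𝕁 → a * b = 0)
    {N : Type u} [AddCommGroup N] [Module Λ N] (hindec : Indec Λ N)
    {n : ℕ} (f : N →ₗ[Λ] (Fin n → Λ)) (v0 : N) (i0 : Fin n) (h0 : f v0 i0 ∉ 𝕁) :
    Module.Projective Λ N := by
  haveI := aux_jacobson_semisimple (Λ := Λ)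
  set π : N →ₗ[Λ] Λ := (LinearMap.proj i0) ∘ₗ f with hπ
  set I : Ideal Λ := LinearMap.range π with hI
  set K : Ideal Λ := I ⊔ 𝕁 with hK
  have hIK : I ≤ K := le_sup_left
  have hJK : 𝕁 ≤ K := le_sup_right
  have hv0I : π v0 ∈ I := LinearMap.mem_range_self π v0
  have hv0 : π v0 ∉ 𝕁 := h0
  -- find a complement to K above 𝕁
  obtain ⟨C', hC'⟩ := exists_isCompl (Submodule.map (Submodule.mkQ 𝕁) K)
  set C : Ideal Λ := Submodule.comap (Submodule.mkQ 𝕁) C' with hC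
  have hJC : 𝕁 ≤ C := by
    intro x hx
    show (Submodule.mkQ 𝕁) x ∈ C'
    have : (Submodule.mkQ 𝕁) x = 0 := (Submodule.Quotient.mk_eq_zero _).mpr hx
    rw [this]
    exact zero_mem _
  have hsup : K ⊔ C = ⊤ := by
    have h1 : Submodule.map (Submodule.mkQ 𝕁) (K ⊔ C) = ⊤ := by
      rw [Submodule.map_sup, hC]
      rw [Submodule.map_comap_eq_of_surjective (Submodule.mkQ_surjective 𝕁)]
      exact codisjoint_iff.mp hC'.codisjoint
    have h2 := (Submodule.map_mkQ_eq_top 𝕁 (K ⊔ C)).mp h1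
    rwa [sup_comm 𝕁 (K ⊔ C), sup_assoc, sup_eq_left.mpr hJC] at h2
  have hinf : K ⊓ C ≤ 𝕁 := by
    intro x hx
    have hxK : (Submodule.mkQ 𝕁) x ∈ Submodule.map (Submodule.mkQ 𝕁) K := Submodule.mem_map_of_mem hx.1
    have hxC : (Submodule.mkQ 𝕁) x ∈ C' := hx.2
    have : (Submodule.mkQ 𝕁) x = 0 := by
      have := hC'.disjoint
      rw [disjoint_iff] at this
      have hmem : (Submodule.mkQ 𝕁) x ∈ Submodule.map (Submodule.mkQ 𝕁) K ⊓ C' := ⟨hxK, hxC⟩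
      rw [this] at hmem
      simpa using hmem
    exact (Submodule.Quotient.mk_eq_zero _).mp this
  -- decompose 1
  have h1mem : (1 : Λ) ∈ K ⊔ C := hsup.symm ▸ Submodule.mem_top
  obtain ⟨x, hxK, c, hcC, hxc⟩ := Submodule.mem_sup.mp h1mem
  set d : Λ := x * x - x with hd
  have hdK : d ∈ K := sub_mem (Ideal.mul_mem_left K x hxK) hxK
  have hdC : d ∈ C := by
    have hceq : c = 1 - x := by rw [← hxc]; noncomm_ring
    have : d = -(x * c) := by rw [hceq, hd]; noncomm_ring
    rw [this]
    exact neg_mem (Ideal.mul_mem_left C x hcC)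
  have hdJ : d ∈ 𝕁 := hinf ⟨hdK, hdC⟩
  have hxJ : x ∉ 𝕁 := by
    intro hxJ
    have h1C : (1 : Λ) ∈ C := by
      rw [← hxc]
      exact add_mem (hJC hxJ) hcC
    have hCtop : C = ⊤ := Ideal.eq_top_of_isUnit_mem C h1C isUnit_one
    have hKJ : K ≤ 𝕁 := by
      intro y hy
      exact hinf ⟨hy, hCtop ▸ Submodule.mem_top⟩
    exact hv0 (hKJ (hIK hv0I))
  set e : Λ := 3 * (x * x) - 2 * (x * x * x) with he
  have heK : e ∈ K := by
    have : e = (3 * x - 2 * (x * x)) * x := by rw [he]; noncomm_ring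
    rw [this]
    exact Ideal.mul_mem_left K _ hxK
  have hexJ : e - x ∈ 𝕁 := by
    have : e - x = (1 - 2 * x) * d := by rw [he, hd]; noncomm_ring
    rw [this]
    exact Ideal.mul_mem_left 𝕁 _ hdJ
  have heJ : e ∉ 𝕁 := by
    intro heJ
    exact hxJ (by simpa using sub_mem heJ hexJ)
  have hee : e * e = e := by
    have hid : e * e - e = (4 * (x * x) - 4 * x - 3) * (d * d) := by rw [he, hd]; noncomm_ring
    have h0 : e * e - e = 0 := by rw [hid, hJ2 d d hdJ hdJ, mul_zero]
    exact sub_eq_zero.mp h0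
  -- write e = y + a with y ∈ I, a ∈ 𝕁
  obtain ⟨y, hyI, a, haJ, hya⟩ := Submodule.mem_sup.mp heK
  set z : Λ := y + a * y with hz
  have hzI : z ∈ I := add_mem hyI (Ideal.mul_mem_left I a hyI)
  have hae : a * e = a * y := by
    rw [← hya, mul_add, hJ2 a a haJ haJ, add_zero]
  have h2 : e = y * e + a * y := by
    calc e = e * e := hee.symm
      _ = (y + a) * e := by rw [hya]
      _ = y * e + a * e := add_mul _ _ _
      _ = y * e + a * y := by rw [hae]
  have hze : z * e = e := by
    have hcong : e * e = (y * e + a * y) * e := by rw [← h2]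
    calc z * e = y * e + a * y * e := by rw [hz]; noncomm_ring
      _ = y * (e * e) + a * y * e := by rw [hee]
      _ = (y * e + a * y) * e := by noncomm_ring
      _ = e * e := hcong.symm
      _ = e := hee
  obtain ⟨u, hu⟩ : ∃ u, π u = z := hzI
  set ψ : N →ₗ[Λ] Λ := (LinearMap.toSpanSingleton Λ Λ e) ∘ₗ π with hψ
  have hψapp : ∀ w, ψ w = π w * e := fun w => by
    simp [hψ, LinearMap.toSpanSingleton_apply, smul_eq_mul]
  have hψu : ψ u = e := by rw [hψapp, hu, hze]
  set p : Λ →ₗ[Λ] N := LinearMap.toSpanSingleton Λ N u with hp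
  set η : Module.End Λ N := p ∘ₗ ψ with hη
  have hηapp : ∀ w, η w = ψ w • u := fun w => by
    simp [hη, hp, LinearMap.toSpanSingleton_apply]
  have hηid : η * η = η := by
    apply LinearMap.ext
    intro w
    rw [Module.End.mul_apply, hηapp, hηapp w, map_smul, smul_eq_mul, hψu, hψapp w,
      mul_assoc, hee]
  rcases hindec.2 η hηid with hη0 | hη1
  · exfalso
    have heu : e • u = 0 := by
      have := hηapp u
      rw [hη0, hψu] at this
      simpa using this.symm
    have : e = 0 := by
      have hψ0 : ψ (e • u) = 0 := by rw [heu, map_zero]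
      rw [map_smul, hψu, smul_eq_mul, hee] at hψ0
      exact hψ0
    exact heJ (this ▸ zero_mem 𝕁)
  · refine Module.Projective.of_split ψ p ?_
    rw [← hη, hη1]
    rfl

/-- Over an artinian ring with radical square zero, any artinian module is noetherian. -/
lemma aux_noetherian [IsArtinian Λ Λ]
    (hJ2 : ∀ a b : Λ, a ∈ 𝕁 → b ∈ 𝕁 → a * b = 0)
    {N : Type u} [AddCommGroup N] [Module Λ N] [IsArtinian Λ N] : IsNoetherian Λ N := by
  set T : Submodule Λ N := 𝕁 • (⊤ : Submodule Λ N) with hT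
  have hTann : ∀ a ∈ 𝕁, ∀ x : ↥T, a • x = 0 := by
    intro a ha x
    apply Subtype.ext
    show a • (x : N) = 0
    have hx : (x : N) ∈ 𝕁 • (⊤ : Submodule Λ N) := x.2
    refine Submodule.smul_induction_on hx ?_ ?_
    · intro b hb w _
      rw [smul_smul, hJ2 a b ha hb, zero_smul]
    · intro w1 w2 h1 h2
      rw [smul_add, h1, h2, add_zero]
  have hQann : ∀ a ∈ 𝕁, ∀ x : N ⧸ T, a • x = 0 := by
    intro a ha x
    obtain ⟨w, rfl⟩ := Submodule.Quotient.mk_surjective T x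
    rw [← Submodule.Quotient.mk_smul, Submodule.Quotient.mk_eq_zero]
    exact Submodule.smul_mem_smul ha Submodule.mem_top
  haveI hss1 : IsSemisimpleModule Λ ↥T := aux_semisimple_of_jacobson_ann hTann
  haveI hss2 : IsSemisimpleModule Λ (N ⧸ T) := aux_semisimple_of_jacobson_ann hQann
  haveI : IsNoetherian Λ ↥T := by
    have h := (IsSemisimpleModule.finite_tfae (R := Λ) (M := ↥T)).out 2 1
    exact h.mp inferInstance
  haveI : IsNoetherian Λ (N ⧸ T) := by
    have h := (IsSemisimpleModule.finite_tfae (R := Λ) (M := N ⧸ T)).out 2 1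
    exact h.mp inferInstance
  exact (isNoetherian_iff_submodule_quotient T).mpr ⟨‹_›, ‹_›⟩

/-- Key case of part 2: a divisible indecomposable module not annihilated by the radical is
injective. -/
lemma aux_injective_of_divisible [IsArtinian Λ Λ]
    (hJ2 : ∀ a b : Λ, a ∈ 𝕁 → b ∈ 𝕁 → a * b = 0)
    {N : Type u} [AddCommGroup N] [Module Λ N] [IsArtinian Λ N] (hindec : Indec Λ N)
    (Q : Type u) [AddCommGroup Q] [Module Λ Q] (hQ : Module.Injective Λ Q)
    (g : Q →ₗ[Λ] N) (hg : Function.Surjective g)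
    (a : Λ) (haJ : a ∈ 𝕁) (v : N) (hav : a • v ≠ 0) :
    Module.Injective Λ N := by
  haveI := aux_jacobson_semisimple (Λ := Λ)
  haveI : IsNoetherian Λ N := aux_noetherian hJ2
  obtain ⟨q, rfl⟩ := hg v
  set s : Q := a • q with hs
  have hgs : g s ≠ 0 := by rwa [hs, map_smul]
  -- the span of `s` is semisimple
  have hle : 𝕁 ≤ LinearMap.ker (LinearMap.toSpanSingleton Λ Q s) := by
    intro b hb
    rw [LinearMap.mem_ker, LinearMap.toSpanSingleton_apply, hs, smul_smul,
      hJ2 b a hb haJ, zero_smul]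
  haveI hssspan : IsSemisimpleModule Λ ↥(Submodule.span Λ {s}) := by
    have hr : LinearMap.range (Submodule.liftQ 𝕁 (LinearMap.toSpanSingleton Λ Q s) hle)
        = Submodule.span Λ {s} := by
      rw [Submodule.range_liftQ]
      exact (LinearMap.span_singleton_eq_range Λ Q s).symm
    rw [← hr]
    exact IsSemisimpleModule.range _
  -- find a nonzero submodule of `Q` meeting `ker g` trivially
  set Ms : Submodule Λ Q := Submodule.span Λ {s} with hMs
  set Kc : Submodule Λ ↥Ms := Submodule.comap Ms.subtype (LinearMap.ker g) with hKc
  obtain ⟨T', hT'⟩ := exists_isCompl Kc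
  set S : Submodule Λ Q := Submodule.map Ms.subtype T' with hS
  have hSdisj : ∀ x ∈ S, g x = 0 → x = 0 := by
    intro x hx hgx
    obtain ⟨t, htT', rfl⟩ := hx
    have htK : t ∈ Kc := by
      rw [hKc, Submodule.mem_comap]
      exact LinearMap.mem_ker.mpr hgx
    have : t ∈ Kc ⊓ T' := ⟨htK, htT'⟩
    rw [disjoint_iff.mp hT'.disjoint] at this
    rw [Submodule.mem_bot] at this
    rw [this]
    rfl
  have hsMs : s ∈ Ms := Submodule.mem_span_singleton_self s
  have hSne : S ≠ ⊥ := by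
    intro hbot
    have hT'bot : T' = ⊥ := by
      rw [eq_bot_iff]
      intro t ht
      have : (Ms.subtype t : Q) ∈ S := Submodule.mem_map_of_mem ht
      rw [hbot, Submodule.mem_bot] at this
      rw [Submodule.mem_bot]
      exact Subtype.ext this
    have hKtop : Kc = ⊤ := by
      have := hT'.codisjoint
      rw [codisjoint_iff, hT'bot, sup_bot_eq] at this
      exact this
    have : (⟨s, hsMs⟩ : ↥Ms) ∈ Kc := hKtop ▸ Submodule.mem_top
    rw [hKc, Submodule.mem_comap] at this
    exact hgs this
  obtain ⟨x₀, hx₀S, hx₀⟩ := Submodule.exists_mem_ne_zero_of_ne_bot hSne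
  -- build a partial splitting using injectivity of Q
  have hinj : Function.Injective (g ∘ₗ S.subtype) := by
    intro x y hxy
    have : g ((x : Q) - y) = 0 := by
      rw [map_sub, sub_eq_zero]
      exact hxy
    have := hSdisj _ (sub_mem x.2 y.2) this
    exact Subtype.ext (sub_eq_zero.mp this)
  obtain ⟨σ, hσ⟩ := hQ.out (g ∘ₗ S.subtype) hinj S.subtype
  set θ : Module.End Λ N := g ∘ₗ σ with hθ
  set n₀ : N := g x₀ with hn₀
  have hn₀ne : n₀ ≠ 0 := fun h => hx₀ (hSdisj x₀ hx₀S h)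
  have hθn₀ : θ n₀ = n₀ := by
    have := hσ ⟨x₀, hx₀S⟩
    rw [hθ, hn₀]
    show g (σ (g x₀)) = g x₀
    have hx : g ((⟨x₀, hx₀S⟩ : ↥S) : Q) = g x₀ := rfl
    rw [show σ (g x₀) = ((⟨x₀, hx₀S⟩ : ↥S) : Q) from this]
  have hθpow : ∀ m : ℕ, (θ ^ m) n₀ = n₀ := by
    intro m
    induction m with
    | zero => rfl
    | succ k ih => rw [pow_succ, Module.End.mul_apply, hθn₀, ih]
  -- Fitting decomposition
  obtain ⟨m, hm⟩ := Filter.eventually_atTop.mp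
    ((θ.eventually_isCompl_ker_pow_range_pow).and (Filter.eventually_ge_atTop 1))
  obtain ⟨hcompl, hm1⟩ := hm m le_rfl
  set R : Submodule Λ N := LinearMap.range (θ ^ m) with hR
  set Kr : Submodule Λ N := LinearMap.ker (θ ^ m) with hKr
  set η : Module.End Λ N := R.subtype ∘ₗ Submodule.linearProjOfIsCompl R Kr hcompl.symm with hη
  have hηS : ∀ x : N, η x ∈ R := fun x => (Submodule.linearProjOfIsCompl R Kr hcompl.symm x).2
  have hηid : ∀ x ∈ R, η x = x := by
    intro x hx
    show (Submodule.projectionOnto R Kr hcompl.symm x : N) = x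
    rw [Submodule.projectionOnto_apply_left hcompl.symm ⟨x, hx⟩]
  have hηzero : ∀ x ∈ Kr, η x = 0 := by
    intro x hx
    show (Submodule.projectionOnto R Kr hcompl.symm x : N) = 0
    rw [Submodule.projectionOnto_apply_of_mem_right hcompl.symm hx]
    rfl
  have hηidem : η * η = η := LinearMap.ext fun x => hηid _ (hηS x)
  have hbij : Function.Bijective θ := by
    obtain ⟨k, rfl⟩ : ∃ k, m = k + 1 := ⟨m - 1, by omega⟩
    rcases hindec.2 η hηidem with h0 | h1
    · exfalso
      have : η n₀ = n₀ := by
        have : n₀ ∈ R := ⟨n₀, hθpow _⟩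
        exact hηid _ this
      rw [h0] at this
      exact hn₀ne (by simpa using this.symm)
    · have hKrbot : Kr = ⊥ := by
        rw [eq_bot_iff]
        intro x hx
        have h0x := hηzero x hx
        rw [h1] at h0x
        simpa using h0x
      have hRtop : R = ⊤ := by
        have := hcompl.symm.codisjoint
        rw [codisjoint_iff, hKrbot, sup_bot_eq] at this
        exact this
      constructor
      · intro x y hxy
        have : θ ^ (k + 1) = θ ^ k * θ := pow_succ θ k
        have hker : x - y ∈ Kr := by
          rw [hKr, LinearMap.mem_ker, this, Module.End.mul_apply, map_sub, hxy, sub_self,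
            map_zero]
        rw [hKrbot, Submodule.mem_bot] at hker
        exact sub_eq_zero.mp hker
      · intro y
        have hy : y ∈ R := hRtop ▸ Submodule.mem_top
        obtain ⟨w, hw⟩ := hy
        exact ⟨(θ ^ k) w, by rw [← Module.End.mul_apply, ← pow_succ', hw]⟩
  set θe : N ≃ₗ[Λ] N := LinearEquiv.ofBijective θ hbij with hθe
  set σ' : N →ₗ[Λ] Q := σ ∘ₗ (θe.symm : N ≃ₗ[Λ] N).toLinearMap with hσ'
  have hgσ' : ∀ y : N, g (σ' y) = y := by
    intro y
    have : g (σ (θe.symm y)) = θ (θe.symm y) := rfl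
    rw [hσ']
    show g (σ (θe.symm y)) = y
    rw [this]
    have : θ (θe.symm y) = θe (θe.symm y) := rfl
    rw [this, θe.apply_symm_apply]
  -- N is a retract of the injective module Q, hence injective
  constructor
  intro X Y _ _ _ _ fXY hfXY gXN
  obtain ⟨H, hH⟩ := hQ.out fXY hfXY (σ' ∘ₗ gXN)
  refine ⟨g ∘ₗ H, fun x => ?_⟩
  show g (H (fXY x)) = gXN x
  rw [hH x]
  show g (σ' (gXN x)) = gXN x
  exact hgσ' _

end Aux

/-- Over an artin algebra with radical square zero, indecomposable torsionless modules are
projective or simple, and indecomposable divisible modules are injective or simple. -/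
theorem stmt7 (k : Type u) [CommRing k] [IsArtinianRing k]
    (Λ : Type u) [Ring Λ] [Algebra k Λ] [Module.Finite k Λ]
    (hJ2 : ∀ a b : Λ, a ∈ (⊥ : Ideal Λ).jacobson → b ∈ (⊥ : Ideal Λ).jacobson →
      a * b = 0) :
    (∀ N : ModuleCat.{u} Λ, Module.Finite Λ N → Indec Λ N → Torsionless Λ N →
      Module.Projective Λ N ∨ IsSimpleModule Λ ↥N) ∧
    (∀ N : ModuleCat.{u} Λ, Module.Finite Λ N → Indec Λ N → Divisible Λ N →
      Module.Injective Λ N ∨ IsSimpleModule Λ ↥N) := by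
  haveI hart : IsArtinian Λ Λ := isArtinian_of_tower k inferInstance
  constructor
  · intro N hfin hindec htl
    obtain ⟨n, f, hf⟩ := htl
    by_cases hc : ∃ v : ↥N, ∃ i, f v i ∉ (⊥ : Ideal Λ).jacobson
    · left
      obtain ⟨v, i, hvi⟩ := hc
      exact aux_projective_of_torsionless hJ2 hindec f v i hvi
    · right
      push_neg at hc
      have hann : ∀ a ∈ (⊥ : Ideal Λ).jacobson, ∀ v : ↥N, a • v = 0 := by
        intro a ha v
        apply hf
        rw [map_smul, map_zero]
        funext i
        rw [Pi.smul_apply, smul_eq_mul]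
        exact hJ2 _ _ ha (hc v i)
      haveI := aux_semisimple_of_jacobson_ann hann
      exact aux_simple_of_indec hindec
  · intro N hfin hindec hdiv
    obtain ⟨Q, hQfin, hQinj, g, hg⟩ := hdiv
    haveI := hfin
    by_cases hc : ∃ a ∈ (⊥ : Ideal Λ).jacobson, ∃ v : ↥N, a • v ≠ 0
    · left
      obtain ⟨a, ha, v, hav⟩ := hc
      haveI : IsArtinian Λ ↥N := isArtinian_of_fg_of_artinian'
      exact aux_injective_of_divisible hJ2 hindec ↥Q hQinj g hg a ha v hav
    · right
      push_neg at hc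
      haveI := aux_semisimple_of_jacobson_ann (N := ↥N) fun a ha v => hc a ha v
      exact aux_simple_of_indec hindec
end

section
/- Let Q⁽¹⁾ and Q⁽²⁾ be finite quivers that are nicely tiered with n₁+1 and n₂+1 tiers and tier functions l₁, l₂ respectively. Then the tensor product quiver Q = Q⁽¹⁾ ⊗ Q⁽²⁾ is nicely tiered with n₁+n₂+1 tiers, with tier function l(x₁x₂) = l₁(x₁) + l₂(x₂). -/
universe u v

section Tiered

variable {V E : Type u} (s t : E → V)

/-- `l` is a tier function exhibiting the quiver `(V, E, s, t)` (arrows `e : s e → t e`)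
as nicely tiered with `n+1` tiers: `l` is surjective onto `{0,…,n}`, drops by one along
every arrow, vanishes on sinks and equals `n` on sources. -/
def IsNicelyTiered (n : ℕ) (l : V → ℕ) : Prop :=
  (∀ x, l x ≤ n) ∧
  (∀ m, m ≤ n → ∃ x, l x = m) ∧
  (∀ e, l (s e) = l (t e) + 1) ∧
  (∀ x, (∀ e, s e ≠ x) → l x = 0) ∧
  (∀ x, (∀ e, t e ≠ x) → l x = n)

/-- The quiver is connected. -/
def QConnected : Prop :=
  ∀ x y : V, Relation.ReflTransGen
    (fun a b => ∃ e, (s e = a ∧ t e = b) ∨ (s e = b ∧ t e = a)) x y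

end Tiered

/-- The tensor product of nicely tiered quivers, with `n₁+1` and `n₂+1` tiers, is nicely
tiered with `n₁+n₂+1` tiers, via the tier function `l(x₁x₂) = l₁(x₁) + l₂(x₂)`. -/
theorem stmt17 {V₁ E₁ V₂ E₂ : Type u} [Fintype V₁] [Fintype E₁] [Fintype V₂] [Fintype E₂]
    (s₁ t₁ : E₁ → V₁) (s₂ t₂ : E₂ → V₂)
    (hc₁ : QConnected s₁ t₁) (hc₂ : QConnected s₂ t₂)
    (n₁ n₂ : ℕ) (l₁ : V₁ → ℕ) (l₂ : V₂ → ℕ)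
    (h₁ : IsNicelyTiered s₁ t₁ n₁ l₁) (h₂ : IsNicelyTiered s₂ t₂ n₂ l₂) :
    IsNicelyTiered
      (Sum.elim (fun q : E₁ × V₂ => (s₁ q.1, q.2)) (fun q : V₁ × E₂ => (q.1, s₂ q.2)))
      (Sum.elim (fun q : E₁ × V₂ => (t₁ q.1, q.2)) (fun q : V₁ × E₂ => (q.1, t₂ q.2)))
      (n₁ + n₂) (fun p : V₁ × V₂ => l₁ p.1 + l₂ p.2) := by
  obtain ⟨hb₁, hs₁, ha₁, hk₁, ho₁⟩ := h₁
  obtain ⟨hb₂, hs₂, ha₂, hk₂, ho₂⟩ := h₂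
  refine ⟨?_, ?_, ?_, ?_, ?_⟩
  · intro x; exact Nat.add_le_add (hb₁ x.1) (hb₂ x.2)
  · intro m hm
    obtain ⟨x₁, hx₁⟩ := hs₁ (min m n₁) (min_le_right _ _)
    obtain ⟨x₂, hx₂⟩ := hs₂ (m - min m n₁) (by omega)
    exact ⟨(x₁, x₂), by simp only []; omega⟩
  · rintro (⟨e₁, z₂⟩ | ⟨z₁, e₂⟩)
    · simpa using by rw [ha₁ e₁]; ring
    · simpa using by rw [ha₂ e₂]; ring
  · rintro ⟨x₁, x₂⟩ hx
    have h1 : l₁ x₁ = 0 := hk₁ x₁ (fun e he => hx (Sum.inl (e, x₂)) (by simp [he]))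
    have h2 : l₂ x₂ = 0 := hk₂ x₂ (fun e he => hx (Sum.inr (x₁, e)) (by simp [he]))
    simp [h1, h2]
  · rintro ⟨x₁, x₂⟩ hx
    have h1 : l₁ x₁ = n₁ := ho₁ x₁ (fun e he => hx (Sum.inl (e, x₂)) (by simp [he]))
    have h2 : l₂ x₂ = n₂ := ho₂ x₂ (fun e he => hx (Sum.inr (x₁, e)) (by simp [he]))
    simp [h1, h2]
end
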